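/- Soundness of loop derivations: if ⟨σ, skip, loop1(e1,s1,e2,s2)::π⟩ →* ⟨σ', skip, π⟩ is a loop derivation (every intermediate stack equals or extends either loop1(e1,s1,e2,s2)::π or loop2(e1,s1,e2,s2)::π), then the big-step loop-iteration judgement ⟨σ, (e1,s1,e2,s2)⟩ ⇓ σ' holds. -/

import Mathlib

/-- Janus reversible assignment operators: `+=`, `-=`, `^=`. -/
inductive Op where
  | add | sub | xor
deriving DecidableEq

/-- The operator inverter `I_op`. -/
def Op.inv : Op → Op
  | .add => .sub
  | .sub => .add
  | .xor => .xor

/-- Interpretation of the operators on integers. -/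
def Op.apply : Op → Int → Int → Int
  | .add, a, b => a + b
  | .sub, a, b => a - b
  | .xor, a, b => Int.xor a b

/-- Storage locations: plain variables and indexed array cells. -/
inductive Loc where
  | var (x : String)
  | arr (x : String) (i : Int)
deriving DecidableEq

/-- A store maps variable names and indexed variable names to values. -/
def Store := Loc → Int

def Store.update (σ : Store) (l : Loc) (v : Int) : Store :=
  fun l' => if l' = l then v else σ l'

/-- The empty store maps every variable to zero. -/
def emptyStore : Store := fun _ => 0

/-- Janus expressions. Binary operators are modelled by their interpretation. -/
inductive Expr where
  | const (c : Int)
  | var (x : String)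
  | arr (x : String) (e : Expr)
  | bop (f : Int → Int → Int) (e1 e2 : Expr)

/-- Evaluation of expressions (a deterministic function of the store). -/
def Expr.eval (σ : Store) : Expr → Int
  | .const c => c
  | .var x => σ (.var x)
  | .arr x e => σ (.arr x (Expr.eval σ e))
  | .bop f e1 e2 => f (Expr.eval σ e1) (Expr.eval σ e2)
/-- Janus statements. -/
inductive Stmt where
  | assign (x : String) (op : Op) (e : Expr)
  | assignArr (x : String) (ei : Expr) (op : Op) (e : Expr)
  | cond (e1 : Expr) (s1 s2 : Stmt) (e2 : Expr)
  | loop (e1 : Expr) (s1 s2 : Stmt) (e2 : Expr)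
  | call (id : String)
  | uncall (id : String)
  | skip
  | seq (s1 s2 : Stmt)

/-- The Janus statement inverter `I`. -/
def Stmt.inv : Stmt → Stmt
  | .assign x op e => .assign x op.inv e
  | .assignArr x ei op e => .assignArr x ei op.inv e
  | .cond e1 s1 s2 e2 => .cond e2 s1.inv s2.inv e1
  | .loop e1 s1 s2 e2 => .loop e2 s1.inv s2.inv e1
  | .call id => .uncall id
  | .uncall id => .call id
  | .skip => .skip
  | .seq s1 s2 => .seq s2.inv s1.inv
mutual
/-- Big-step semantics of Janus, `⟨σ, s⟩ ⇓ σ'`. -/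
inductive BigStep (Γ : String → Stmt) : Store → Stmt → Store → Prop where
  | assVar {σ : Store} {x : String} {op : Op} {e : Expr} :
      BigStep Γ σ (.assign x op e)
        (σ.update (.var x) (op.apply (σ (.var x)) (e.eval σ)))
  | assArr {σ : Store} {x : String} {ei e : Expr} {op : Op} :
      BigStep Γ σ (.assignArr x ei op e)
        (σ.update (.arr x (ei.eval σ)) (op.apply (σ (.arr x (ei.eval σ))) (e.eval σ)))
  | call {σ σ' : Store} {id : String} :
      BigStep Γ σ (Γ id) σ' → BigStep Γ σ (.call id) σ'
  | uncall {σ σ' : Store} {id : String} :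
      BigStep Γ σ (Γ id).inv σ' → BigStep Γ σ (.uncall id) σ'
  | seq {σ σ' σ'' : Store} {s1 s2 : Stmt} :
      BigStep Γ σ s1 σ' → BigStep Γ σ' s2 σ'' → BigStep Γ σ (.seq s1 s2) σ''
  | ifTrue {σ σ' : Store} {e1 e2 : Expr} {s1 s2 : Stmt} :
      e1.eval σ ≠ 0 → BigStep Γ σ s1 σ' → e2.eval σ' ≠ 0 →
      BigStep Γ σ (.cond e1 s1 s2 e2) σ'
  | ifFalse {σ σ' : Store} {e1 e2 : Expr} {s1 s2 : Stmt} :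
      e1.eval σ = 0 → BigStep Γ σ s2 σ' → e2.eval σ' = 0 →
      BigStep Γ σ (.cond e1 s1 s2 e2) σ'
  | loopMain {σ σ' σ'' : Store} {e1 e2 : Expr} {s1 s2 : Stmt} :
      e1.eval σ ≠ 0 → BigStep Γ σ s1 σ' → BigLoop Γ σ' e1 s1 s2 e2 σ'' →
      BigStep Γ σ (.loop e1 s1 s2 e2) σ''
  | skip {σ : Store} : BigStep Γ σ .skip σ

/-- Big-step loop-iteration judgement on tuples `(e1, s1, e2, s2)`,
`⟨σ, (e1,s1,e2,s2)⟩ ⇓ σ'`. -/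
inductive BigLoop (Γ : String → Stmt) : Store → Expr → Stmt → Stmt → Expr → Store → Prop where
  | base {σ : Store} {e1 e2 : Expr} {s1 s2 : Stmt} :
      e2.eval σ ≠ 0 → BigLoop Γ σ e1 s1 s2 e2 σ
  | step {σ σ' σ'' σ''' : Store} {e1 e2 : Expr} {s1 s2 : Stmt} :
      e2.eval σ = 0 → BigStep Γ σ s2 σ' → e1.eval σ' = 0 → BigStep Γ σ' s1 σ'' →
      BigLoop Γ σ'' e1 s1 s2 e2 σ''' → BigLoop Γ σ e1 s1 s2 e2 σ'''
end
/-- Stack elements of the stack-based small-step semantics. -/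
inductive Frame where
  | seq (s : Stmt)
  | ifTrue (e : Expr)
  | ifFalse (e : Expr)
  | loop1 (e1 : Expr) (s1 s2 : Stmt) (e2 : Expr)
  | loop2 (e1 : Expr) (s1 s2 : Stmt) (e2 : Expr)

/-- Configurations `⟨σ, s, π⟩` of the stack-based small-step semantics. -/
structure Config where
  store : Store
  stmt : Stmt
  stack : List Frame

/-- The stack-based small-step semantics of Janus. -/
inductive Step (Γ : String → Stmt) : Config → Config → Prop where
  | assVar {σ : Store} {x : String} {op : Op} {e : Expr} {π : List Frame} :
      Step Γ ⟨σ, .assign x op e, π⟩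
        ⟨σ.update (.var x) (op.apply (σ (.var x)) (e.eval σ)), .skip, π⟩
  | assArr {σ : Store} {x : String} {ei e : Expr} {op : Op} {π : List Frame} :
      Step Γ ⟨σ, .assignArr x ei op e, π⟩
        ⟨σ.update (.arr x (ei.eval σ)) (op.apply (σ (.arr x (ei.eval σ))) (e.eval σ)), .skip, π⟩
  | call {σ : Store} {id : String} {π : List Frame} :
      Step Γ ⟨σ, .call id, π⟩ ⟨σ, Γ id, π⟩
  | uncall {σ : Store} {id : String} {π : List Frame} :
      Step Γ ⟨σ, .uncall id, π⟩ ⟨σ, (Γ id).inv, π⟩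
  | seq1 {σ : Store} {s1 s2 : Stmt} {π : List Frame} :
      Step Γ ⟨σ, .seq s1 s2, π⟩ ⟨σ, s1, .seq s2 :: π⟩
  | seq2 {σ : Store} {s2 : Stmt} {π : List Frame} :
      Step Γ ⟨σ, .skip, .seq s2 :: π⟩ ⟨σ, s2, π⟩
  | ifTrue1 {σ : Store} {e1 e2 : Expr} {s1 s2 : Stmt} {π : List Frame} :
      e1.eval σ ≠ 0 →
      Step Γ ⟨σ, .cond e1 s1 s2 e2, π⟩ ⟨σ, s1, .ifTrue e2 :: π⟩
  | ifTrue2 {σ : Store} {e2 : Expr} {π : List Frame} :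
      e2.eval σ ≠ 0 →
      Step Γ ⟨σ, .skip, .ifTrue e2 :: π⟩ ⟨σ, .skip, π⟩
  | ifFalse1 {σ : Store} {e1 e2 : Expr} {s1 s2 : Stmt} {π : List Frame} :
      e1.eval σ = 0 →
      Step Γ ⟨σ, .cond e1 s1 s2 e2, π⟩ ⟨σ, s2, .ifFalse e2 :: π⟩
  | ifFalse2 {σ : Store} {e2 : Expr} {π : List Frame} :
      e2.eval σ = 0 →
      Step Γ ⟨σ, .skip, .ifFalse e2 :: π⟩ ⟨σ, .skip, π⟩
  | loopMain {σ : Store} {e1 e2 : Expr} {s1 s2 : Stmt} {π : List Frame} :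
      e1.eval σ ≠ 0 →
      Step Γ ⟨σ, .loop e1 s1 s2 e2, π⟩ ⟨σ, s1, .loop1 e1 s1 s2 e2 :: π⟩
  | loopBase {σ : Store} {e1 e2 : Expr} {s1 s2 : Stmt} {π : List Frame} :
      e2.eval σ ≠ 0 →
      Step Γ ⟨σ, .skip, .loop1 e1 s1 s2 e2 :: π⟩ ⟨σ, .skip, π⟩
  | loop1 {σ : Store} {e1 e2 : Expr} {s1 s2 : Stmt} {π : List Frame} :
      e2.eval σ = 0 →
      Step Γ ⟨σ, .skip, .loop1 e1 s1 s2 e2 :: π⟩ ⟨σ, s2, .loop2 e1 s1 s2 e2 :: π⟩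
  | loop2 {σ : Store} {e1 e2 : Expr} {s1 s2 : Stmt} {π : List Frame} :
      e1.eval σ = 0 →
      Step Γ ⟨σ, .skip, .loop2 e1 s1 s2 e2 :: π⟩ ⟨σ, s1, .loop1 e1 s1 s2 e2 :: π⟩
/-- `PathP R P c c'` : there is an `R`-derivation from `c` to `c'` all of whose
configurations except possibly the last one satisfy the invariant `P`
(used to express *balanced* and *loop* derivations via conditions on the
intermediate stacks). -/
inductive PathP (R : Config → Config → Prop) (P : Config → Prop) : Config → Config → Prop where
  | refl (c : Config) : PathP R P c c
  | head {c c' c'' : Config} : P c → R c c' → PathP R P c' c'' → PathP R P c c''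

/-! Read each pending stack frame as the big-step computation it still owes: `seq s` owes `s`,
`ifTrue e`/`ifFalse e` owe the exit test, `loop1` owes the remaining iterations (a `BigLoop`),
and `loop2` owes the test of `e1` and the body `s1` before them. A configuration `⟨σ, s, ρ⟩`
then denotes running `s` followed by the frames of `ρ` down to `π`. Every small step preserves
this denotation read backwards, so it carries over from the last configuration of a derivation
to the first; that all stacks stay above `π` is what keeps a frame from being skipped. -/

inductive StackEval (Γ : String → Stmt) (π : List Frame) :
    List Frame → Store → Store → Prop where
  | nil {σ : Store} : StackEval Γ π π σ σ
  | seq {σ σ' σ'' : Store} {s : Stmt} {ρ : List Frame} :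
      BigStep Γ σ s σ' → StackEval Γ π ρ σ' σ'' → StackEval Γ π (.seq s :: ρ) σ σ''
  | ifTrue {σ σ' : Store} {e : Expr} {ρ : List Frame} :
      e.eval σ ≠ 0 → StackEval Γ π ρ σ σ' → StackEval Γ π (.ifTrue e :: ρ) σ σ'
  | ifFalse {σ σ' : Store} {e : Expr} {ρ : List Frame} :
      e.eval σ = 0 → StackEval Γ π ρ σ σ' → StackEval Γ π (.ifFalse e :: ρ) σ σ'
  | loop1 {σ σ' σ'' : Store} {e1 e2 : Expr} {s1 s2 : Stmt} {ρ : List Frame} :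
      BigLoop Γ σ e1 s1 s2 e2 σ' → StackEval Γ π ρ σ' σ'' →
      StackEval Γ π (.loop1 e1 s1 s2 e2 :: ρ) σ σ''
  | loop2 {σ σ' σ'' σ''' : Store} {e1 e2 : Expr} {s1 s2 : Stmt} {ρ : List Frame} :
      e1.eval σ = 0 → BigStep Γ σ s1 σ' → BigLoop Γ σ' e1 s1 s2 e2 σ'' →
      StackEval Γ π ρ σ'' σ''' → StackEval Γ π (.loop2 e1 s1 s2 e2 :: ρ) σ σ'''

def ConfigEval (Γ : String → Stmt) (π : List Frame) (c : Config) (σ' : Store) : Prop :=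
  ∃ σ₁, BigStep Γ c.store c.stmt σ₁ ∧ StackEval Γ π c.stack σ₁ σ'

theorem List.suffix_of_suffix_cons_of_suffix_cons {α : Type*} {l ρ : List α} {a b : α}
    (hab : a ≠ b) (ha : l <:+ a :: ρ) (hb : l <:+ b :: ρ) : l <:+ ρ := by
  rcases List.suffix_cons_iff.mp ha with rfl | h
  · rcases List.suffix_cons_iff.mp hb with h | h
    · exact absurd (List.cons.inj h).1 hab
    · exact absurd h.length_le (by simp)
  · exact h

namespace StackEval

variable {Γ : String → Stmt} {π : List Frame}

theorem suffix {ρ : List Frame} {σ σ' : Store} (h : StackEval Γ π ρ σ σ') : π <:+ ρ := by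
  induction h with
  | nil => exact List.suffix_refl π
  | seq _ _ ih | ifTrue _ _ ih | ifFalse _ _ ih | loop1 _ _ ih | loop2 _ _ _ _ ih =>
    exact ih.trans (List.suffix_cons _ _)

theorem eq_of_self {σ σ' : Store} (h : StackEval Γ π π σ σ') : σ = σ' := by
  cases h with
  | nil => rfl
  | seq _ h | ifTrue _ h | ifFalse _ h | loop1 _ h | loop2 _ _ _ h =>
    exact absurd h.suffix.length_le (by simp)

end StackEval

theorem ConfigEval.of_step {Γ : String → Stmt} {π : List Frame} {c c' : Config} {σ' : Store}
    (hstep : Step Γ c c') (hc : π <:+ c.stack) (h : ConfigEval Γ π c' σ') :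
    ConfigEval Γ π c σ' := by
  obtain ⟨σ₁, hs, hk⟩ := h
  cases hstep with
  | assVar => cases hs; exact ⟨_, .assVar, hk⟩
  | assArr => cases hs; exact ⟨_, .assArr, hk⟩
  | call => exact ⟨_, .call hs, hk⟩
  | uncall => exact ⟨_, .uncall hs, hk⟩
  | seq1 =>
    cases hk with
    | nil => exact absurd hc.length_le (by simp)
    | seq hs₂ hk => exact ⟨_, .seq hs hs₂, hk⟩
  | seq2 => exact ⟨_, .skip, .seq hs hk⟩
  | ifTrue1 he₁ =>
    cases hk with
    | nil => exact absurd hc.length_le (by simp)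
    | ifTrue he₂ hk => exact ⟨_, .ifTrue he₁ hs he₂, hk⟩
  | ifTrue2 he₂ => cases hs; exact ⟨_, .skip, .ifTrue he₂ hk⟩
  | ifFalse1 he₁ =>
    cases hk with
    | nil => exact absurd hc.length_le (by simp)
    | ifFalse he₂ hk => exact ⟨_, .ifFalse he₁ hs he₂, hk⟩
  | ifFalse2 he₂ => cases hs; exact ⟨_, .skip, .ifFalse he₂ hk⟩
  | loopMain he₁ =>
    cases hk with
    | nil => exact absurd hc.length_le (by simp)
    | loop1 hloop hk => exact ⟨_, .loopMain he₁ hs hloop, hk⟩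
  | loopBase he₂ => cases hs; exact ⟨_, .skip, .loop1 (.base he₂) hk⟩
  | loop1 he₂ =>
    have hρ := List.suffix_of_suffix_cons_of_suffix_cons (by simp) hc hk.suffix
    cases hk with
    | nil => exact absurd hρ.length_le (by simp)
    | loop2 he₁ hs₁ hloop hk => exact ⟨_, .skip, .loop1 (.step he₂ hs he₁ hs₁ hloop) hk⟩
  | loop2 he₁ =>
    have hρ := List.suffix_of_suffix_cons_of_suffix_cons (by simp) hc hk.suffix
    cases hk with
    | nil => exact absurd hρ.length_le (by simp)
    | loop1 hloop hk => exact ⟨_, .skip, .loop2 he₁ hs hloop hk⟩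

theorem ConfigEval.of_pathP {Γ : String → Stmt} {P : Config → Prop} {π : List Frame}
    {c c' : Config} {σ' : Store} (hP : ∀ d, P d → π <:+ d.stack)
    (hpath : PathP (Step Γ) P c c') (h : ConfigEval Γ π c' σ') : ConfigEval Γ π c σ' := by
  induction hpath with
  | refl => exact h
  | head hd hstep _ ih => exact .of_step hstep (hP _ hd) (ih h)

/-- Soundness of loop derivations: if
`⟨σ, skip, loop1(e1,s1,e2,s2)::π⟩ →* ⟨σ', skip, π⟩` is a loop derivation (every
intermediate stack equals or extends either `loop1(e1,s1,e2,s2)::π` or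
`loop2(e1,s1,e2,s2)::π`), then `⟨σ, (e1,s1,e2,s2)⟩ ⇓ σ'`. -/
theorem stmt6_soundness_loop (Γ : String → Stmt) (σ σ' : Store)
    (e1 e2 : Expr) (s1 s2 : Stmt) (π : List Frame)
    (h : PathP (Step Γ)
          (fun c => (∃ τ, c.stack = τ ++ (Frame.loop1 e1 s1 s2 e2 :: π)) ∨
                    (∃ τ, c.stack = τ ++ (Frame.loop2 e1 s1 s2 e2 :: π)))
          ⟨σ, .skip, .loop1 e1 s1 s2 e2 :: π⟩ ⟨σ', .skip, π⟩) :
    BigLoop Γ σ e1 s1 s2 e2 σ' := by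
  have hstart : ConfigEval Γ π ⟨σ, .skip, .loop1 e1 s1 s2 e2 :: π⟩ σ' := by
    refine .of_pathP ?_ h ⟨σ', .skip, .nil⟩
    rintro d (⟨τ, hd⟩ | ⟨τ, hd⟩) <;>
      exact hd ▸ (List.suffix_cons _ _).trans (List.suffix_append _ _)
  obtain ⟨_, hskip, hk⟩ := hstart
  cases hskip
  cases hk with
  | loop1 hloop hk => exact hk.eq_of_self ▸ hloop
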